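/- arXiv:2305.11953 — 2 statements merged into one kernel-verified Lean document; each statement's English description precedes it below -/
import Mathlib

section
/- For any C ≥ 2 unit vectors v_1,...,v_C in a real inner product space, the maximum over distinct pairs of ⟨v_c, v_{c'}⟩ is at least -1/(C-1), with equality achieved if and only if all pairwise inner products equal -1/(C-1) and the vectors sum to zero. -/
/-- For any `C ≥ 2` unit vectors, the maximal pairwise inner product is at least
`-1/(C-1)`, and it equals that bound (i.e. all pairwise inner products are
`≤ -1/(C-1)`) iff all pairwise inner products equal `-1/(C-1)` and the
vectors sum to zero. -/
theorem max_pairwise_inner_ge_simplexETF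
    {E : Type*} [NormedAddCommGroup E] [InnerProductSpace ℝ E]
    (C : ℕ) (hC : 2 ≤ C) (v : Fin C → E) (hnorm : ∀ c, ‖v c‖ = 1) :
    (∃ c c' : Fin C, c ≠ c' ∧ -1 / ((C : ℝ) - 1) ≤ (inner ℝ (v c) (v c') : ℝ)) ∧
    ((∀ c c' : Fin C, c ≠ c' → (inner ℝ (v c) (v c') : ℝ) ≤ -1 / ((C : ℝ) - 1)) ↔
      ((∀ c c' : Fin C, c ≠ c' → (inner ℝ (v c) (v c') : ℝ) = -1 / ((C : ℝ) - 1)) ∧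
        ∑ c, v c = 0)) := by
  have hCR : (2:ℝ) ≤ (C:ℝ) := by exact_mod_cast hC
  have hC1 : (0:ℝ) < (C:ℝ) - 1 := by linarith
  set κ : ℝ := -1 / ((C : ℝ) - 1) with hκ
  set D : ℝ := ∑ c : Fin C, ∑ c' ∈ Finset.univ.erase c, (inner ℝ (v c) (v c') : ℝ)
    with hD
  -- key identity : ‖∑ v‖² = C + D
  have key : ‖∑ c, v c‖ ^ 2 = (C : ℝ) + D := by
    have h1 : ‖∑ c, v c‖ ^ 2 = ∑ c : Fin C, ∑ c' : Fin C, (inner ℝ (v c) (v c') : ℝ) := by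
      rw [← real_inner_self_eq_norm_sq, sum_inner]
      exact Finset.sum_congr rfl fun c _ => inner_sum _ _ _
    rw [h1, hD]
    have h2 : ∀ c : Fin C, ∑ c' : Fin C, (inner ℝ (v c) (v c') : ℝ)
        = 1 + ∑ c' ∈ Finset.univ.erase c, (inner ℝ (v c) (v c') : ℝ) := by
      intro c
      rw [← Finset.sum_erase_add _ _ (Finset.mem_univ c), real_inner_self_eq_norm_sq,
        hnorm c]
      ring
    rw [Finset.sum_congr rfl fun c _ => h2 c, Finset.sum_add_distrib]
    simp [Finset.card_univ]
  have hDge : -(C : ℝ) ≤ D := by nlinarith [sq_nonneg ‖∑ c, v c‖]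
  -- constant sum
  have hconst : ∑ c : Fin C, ∑ _c' ∈ Finset.univ.erase c, κ = -(C : ℝ) := by
    have hcard : ∀ c : Fin C, (Finset.univ.erase c).card = C - 1 := fun c => by
      rw [Finset.card_erase_of_mem (Finset.mem_univ c), Finset.card_univ, Fintype.card_fin]
    have h1 : ((C : ℝ) - 1) = ((C - 1 : ℕ) : ℝ) := by
      have : 1 ≤ C := by omega
      push_cast [Nat.cast_sub this]; ring
    simp only [Finset.sum_const, hcard, nsmul_eq_mul, Finset.sum_const, Finset.card_univ,
      Fintype.card_fin]
    rw [hκ, ← h1]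
    field_simp
  have hne : (Finset.univ : Finset (Fin C)).Nonempty := ⟨⟨0, by omega⟩, Finset.mem_univ _⟩
  have hene : ∀ c : Fin C, (Finset.univ.erase c).Nonempty := fun c => by
    rw [← Finset.card_pos, Finset.card_erase_of_mem (Finset.mem_univ c), Finset.card_univ,
      Fintype.card_fin]
    omega
  constructor
  · by_contra h
    push_neg at h
    have hlt : D < ∑ c : Fin C, ∑ _c' ∈ Finset.univ.erase c, κ := by
      refine Finset.sum_lt_sum_of_nonempty hne fun c _ => ?_
      refine Finset.sum_lt_sum_of_nonempty (hene c) fun c' hc' => ?_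
      have : c ≠ c' := fun he => (Finset.ne_of_mem_erase hc') he.symm
      exact h c c' this
    rw [hconst] at hlt
    linarith
  · constructor
    · intro h
      have hDle : D ≤ -(C : ℝ) := by
        rw [← hconst]
        refine Finset.sum_le_sum fun c _ => Finset.sum_le_sum fun c' hc' => ?_
        exact h c c' fun he => (Finset.ne_of_mem_erase hc') he.symm
      have hDeq : D = -(C : ℝ) := le_antisymm hDle hDge
      have hsum0 : ∑ c, v c = 0 := by
        have : ‖∑ c, v c‖ ^ 2 = 0 := by rw [key, hDeq]; ring
        simpa [pow_eq_zero_iff] using this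
      refine ⟨fun c c' hcc' => ?_, hsum0⟩
      have hz : ∑ c : Fin C, ∑ c' ∈ Finset.univ.erase c,
          (κ - (inner ℝ (v c) (v c') : ℝ)) = 0 := by
        rw [Finset.sum_congr rfl fun c _ => Finset.sum_sub_distrib (f := fun _ => κ) (g := fun c' => (inner ℝ (v c) (v c') : ℝ)), Finset.sum_sub_distrib,
          hconst, ← hD, hDeq]
        ring
      have hnn : ∀ c ∈ (Finset.univ : Finset (Fin C)), ∀ c' ∈ Finset.univ.erase c,
          0 ≤ κ - (inner ℝ (v c) (v c') : ℝ) := fun c _ c' hc' =>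
        sub_nonneg.2 (h c c' fun he => (Finset.ne_of_mem_erase hc') he.symm)
      have := (Finset.sum_eq_zero_iff_of_nonneg
        (fun c hc => Finset.sum_nonneg (hnn c hc))).1 hz c (Finset.mem_univ c)
      have := (Finset.sum_eq_zero_iff_of_nonneg (hnn c (Finset.mem_univ c))).1 this c'
        (Finset.mem_erase.2 ⟨Ne.symm hcc', Finset.mem_univ _⟩)
      linarith
    · rintro ⟨h, -⟩ c c' hcc'
      exact le_of_eq (h c c' hcc')
end

section
/- The InfoNCE loss with n negatives is bounded below by log(n) minus the mutual-information-type quantity: for any joint distribution of positive pairs and any critic s, E[-log( e^{s(z₁,z₂)} / Σ_{j=1}^n e^{s(z₁,z_j')} )] ≥ log n - I(Z₁; Z₂), where the n-1 samples z_j' are i.i.d. from the marginal of Z₂. Consequently, the InfoNCE estimator of mutual information is bounded above by log n. -/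
open Finset

lemma infoNCE_prodsum {B : Type*} [Fintype B] (k : ℕ) (q : B → ℝ)
    (hq1 : ∑ b, q b = 1) : ∑ w : Fin k → B, ∏ j, q (w j) = 1 := by
  classical
  have h := Finset.prod_univ_sum (fun _ : Fin k => (Finset.univ : Finset B)) (fun _ b => q b)
  simp only [hq1, Finset.prod_const_one, Fintype.piFinset_univ] at h
  exact h.symm

lemma infoNCE_sym {B : Type*} [Fintype B] (m : ℕ) (q f : B → ℝ)
    (hq1 : ∑ b, q b = 1) (hf : ∀ b, 0 < f b) :
    ∑ b, ∑ w : Fin m → B, (q b * ∏ j, q (w j)) * (f b / (f b + ∑ j, f (w j)))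
      = 1 / (m + 1) := by
  classical
  set T : Fin (m + 1) → ℝ :=
    fun k => ∑ v : Fin (m + 1) → B, (∏ i, q (v i)) * (f (v k) / ∑ i, f (v i)) with hT
  have hS : ∀ v : Fin (m + 1) → B, 0 < ∑ i, f (v i) :=
    fun v => Finset.sum_pos (fun i _ => hf _) ⟨0, Finset.mem_univ _⟩
  have hLT : (∑ b, ∑ w : Fin m → B,
      (q b * ∏ j, q (w j)) * (f b / (f b + ∑ j, f (w j)))) = T 0 := by
    have hpr := Fintype.sum_prod_type (f := fun x : B × (Fin m → B) =>
      (q x.1 * ∏ j, q (x.2 j)) * (f x.1 / (f x.1 + ∑ j, f (x.2 j))))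
    rw [← hpr]
    refine Fintype.sum_equiv (Fin.consEquiv (fun _ => B)) _ _ ?_
    rintro ⟨b, w⟩
    simp only [Fin.consEquiv_apply, Fin.prod_univ_succ, Fin.sum_univ_succ,
      Fin.cons_zero, Fin.cons_succ]
  have hTk : ∀ k, T k = T 0 := by
    intro k
    refine (Fintype.sum_equiv (Equiv.arrowCongr (Equiv.swap (0 : Fin (m+1)) k) (Equiv.refl B))
      (fun v => (∏ i, q (v i)) * (f (v 0) / ∑ i, f (v i)))
      (fun v => (∏ i, q (v i)) * (f (v k) / ∑ i, f (v i))) ?_).symm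
    intro v
    simp only [Equiv.arrowCongr_apply, Equiv.refl_symm, Equiv.coe_refl, Function.comp,
      Equiv.symm_swap, id_eq]
    rw [Equiv.swap_apply_right]
    congr 1
    · exact (Equiv.prod_comp (Equiv.swap (0 : Fin (m+1)) k) (fun i => q (v i))).symm
    · congr 1
      exact (Equiv.sum_comp (Equiv.swap (0 : Fin (m+1)) k) (fun i => f (v i))).symm
  have hsumT : ∑ k, T k = 1 := by
    rw [hT]
    rw [Finset.sum_comm]
    have h2 : ∀ v : Fin (m + 1) → B,
        (∑ k, (∏ i, q (v i)) * (f (v k) / ∑ i, f (v i))) = ∏ i, q (v i) := by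
      intro v
      rw [← Finset.mul_sum, ← Finset.sum_div, div_self (hS v).ne', mul_one]
    rw [Finset.sum_congr rfl (fun v _ => h2 v)]
    exact infoNCE_prodsum (m + 1) q hq1
  have hconst : ∑ k : Fin (m+1), T k = ((m : ℝ) + 1) * T 0 := by
    rw [Finset.sum_congr rfl (fun k _ => hTk k), Finset.sum_const, Finset.card_univ,
      Fintype.card_fin, nsmul_eq_mul]
    push_cast; ring
  rw [hLT]
  have h3 : ((m : ℝ) + 1) * T 0 = 1 := by rw [← hconst]; exact hsumT
  have hm : ((m : ℝ) + 1) ≠ 0 := by positivity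
  field_simp at h3 ⊢
  linarith

theorem infoNCE_aux
    {A B : Type*} [Fintype A] [Fintype B] [Nonempty A] [Nonempty B]
    (m : ℕ)
    (p : A → B → ℝ) (hp : ∀ a b, 0 ≤ p a b) (hsum : ∑ a, ∑ b, p a b = 1)
    (s : A → B → ℝ) :
    Real.log ((m + 1 : ℕ) : ℝ) -
        (∑ a, ∑ b, p a b * Real.log (p a b / ((∑ b', p a b') * (∑ a', p a' b)))) ≤
      (∑ a, ∑ b, ∑ w : Fin m → B,
        (p a b * ∏ j, (∑ a', p a' (w j))) *
          (-Real.log (Real.exp (s a b) /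
            (Real.exp (s a b) + ∑ j, Real.exp (s a (w j)))))) := by
  classical
  have hcast : ((m + 1 : ℕ) : ℝ) = (m : ℝ) + 1 := by push_cast; ring
  set c : ℝ := (m : ℝ) + 1 with hc
  have hcpos : (0:ℝ) < c := by positivity
  have hqnn : ∀ b, (0:ℝ) ≤ ∑ a', p a' b := fun b => Finset.sum_nonneg fun a _ => hp a b
  have hpAnn : ∀ a, (0:ℝ) ≤ ∑ b', p a b' := fun a => Finset.sum_nonneg fun b _ => hp a b
  have hq1 : ∑ b, ∑ a', p a' b = 1 := by rw [Finset.sum_comm]; exact hsum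
  have hprodsum : ∑ w : Fin m → B, ∏ j, (∑ a', p a' (w j)) = 1 :=
    infoNCE_prodsum m _ hq1
  have hprodnn : ∀ w : Fin m → B, (0:ℝ) ≤ ∏ j, (∑ a', p a' (w j)) :=
    fun w => Finset.prod_nonneg fun j _ => hqnn _
  have hD : ∀ a b (w : Fin m → B),
      (0:ℝ) < Real.exp (s a b) + ∑ j, Real.exp (s a (w j)) := by
    intro a b w
    have h := Finset.sum_nonneg (fun j (_ : j ∈ Finset.univ) => (Real.exp_pos (s a (w j))).le)
    linarith [Real.exp_pos (s a b)]
  -- total mass of the K function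
  have hK : ∑ a, ∑ b, ∑ w : Fin m → B,
      c * ((∑ b', p a b') * (((∑ a', p a' b) * ∏ j, (∑ a', p a' (w j))) *
        (Real.exp (s a b) /
          (Real.exp (s a b) + ∑ j, Real.exp (s a (w j)))))) = 1 := by
    have ha : ∀ a, ∑ b, ∑ w : Fin m → B,
        c * ((∑ b', p a b') * (((∑ a', p a' b) * ∏ j, (∑ a', p a' (w j))) *
          (Real.exp (s a b) /
            (Real.exp (s a b) + ∑ j, Real.exp (s a (w j)))))) = ∑ b', p a b' := by
      intro a
      have hsym := infoNCE_sym m (fun b => ∑ a', p a' b) (fun b => Real.exp (s a b))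
        hq1 (fun b => Real.exp_pos _)
      calc ∑ b, ∑ w : Fin m → B,
            c * ((∑ b', p a b') * (((∑ a', p a' b) * ∏ j, (∑ a', p a' (w j))) *
              (Real.exp (s a b) /
                (Real.exp (s a b) + ∑ j, Real.exp (s a (w j))))))
          = (c * (∑ b', p a b')) * ∑ b, ∑ w : Fin m → B,
              ((∑ a', p a' b) * ∏ j, (∑ a', p a' (w j))) *
                (Real.exp (s a b) /
                  (Real.exp (s a b) + ∑ j, Real.exp (s a (w j)))) := by
            rw [Finset.mul_sum]
            refine Finset.sum_congr rfl fun b _ => ?_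
            rw [Finset.mul_sum]
            exact Finset.sum_congr rfl fun w _ => by ring
        _ = (c * (∑ b', p a b')) * (1 / c) := by rw [hsym]
        _ = ∑ b', p a b' := by field_simp
    rw [Finset.sum_congr rfl fun a _ => ha a]
    exact hsum
  -- pointwise bound
  have hpoint : ∀ (a : A) (b : B) (w : Fin m → B),
      (p a b * ∏ j, (∑ a', p a' (w j))) *
          (Real.log c + 1 - Real.log (p a b / ((∑ b', p a b') * (∑ a', p a' b))))
        - c * ((∑ b', p a b') * (((∑ a', p a' b) * ∏ j, (∑ a', p a' (w j))) *
            (Real.exp (s a b) /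
              (Real.exp (s a b) + ∑ j, Real.exp (s a (w j))))))
      ≤ (p a b * ∏ j, (∑ a', p a' (w j))) *
          (-Real.log (Real.exp (s a b) /
            (Real.exp (s a b) + ∑ j, Real.exp (s a (w j))))) := by
    intro a b w
    have hDpos := hD a b w
    by_cases h0 : p a b * ∏ j, (∑ a', p a' (w j)) = 0
    · rw [h0, zero_mul, zero_mul, zero_sub]
      have hKnn : (0:ℝ) ≤ c * ((∑ b', p a b') * (((∑ a', p a' b) * ∏ j, (∑ a', p a' (w j))) *
          (Real.exp (s a b) /
            (Real.exp (s a b) + ∑ j, Real.exp (s a (w j)))))) :=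
        mul_nonneg hcpos.le (mul_nonneg (hpAnn a)
          (mul_nonneg (mul_nonneg (hqnn b) (hprodnn w))
            (div_nonneg (Real.exp_pos _).le hDpos.le)))
      linarith
    · have h0' := mul_ne_zero_iff.mp h0
      have hppos : 0 < p a b := lt_of_le_of_ne (hp a b) (Ne.symm h0'.1)
      have hprpos : 0 < ∏ j, (∑ a', p a' (w j)) :=
        lt_of_le_of_ne (hprodnn w) (Ne.symm h0'.2)
      have hpApos : 0 < ∑ b', p a b' :=
        lt_of_lt_of_le hppos (Finset.single_le_sum (fun b' _ => hp a b') (Finset.mem_univ b))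
      have hqpos : 0 < ∑ a', p a' b :=
        lt_of_lt_of_le hppos (Finset.single_le_sum (fun a' _ => hp a' b) (Finset.mem_univ a))
      set D : ℝ := Real.exp (s a b) + ∑ j, Real.exp (s a (w j)) with hDdef
      set x : ℝ := c * ((∑ b', p a b') * ((∑ a', p a' b) * Real.exp (s a b))) / (D * p a b)
        with hxdef
      have hxpos : 0 < x := by
        refine div_pos (mul_pos hcpos (mul_pos hpApos (mul_pos hqpos (Real.exp_pos _)))) ?_
        exact mul_pos hDpos hppos
      have hlog : Real.log x ≤ x - 1 := Real.log_le_sub_one_of_pos hxpos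
      have hlogx : Real.log x = Real.log c + (Real.log (∑ b', p a b') +
          (Real.log (∑ a', p a' b) + s a b)) - (Real.log D + Real.log (p a b)) := by
        rw [hxdef, Real.log_div (by positivity) (by positivity),
          Real.log_mul hcpos.ne' (by positivity),
          Real.log_mul hpApos.ne' (by positivity),
          Real.log_mul hqpos.ne' (Real.exp_ne_zero _),
          Real.log_mul hDpos.ne' hppos.ne', Real.log_exp]
      have hlogfrac : Real.log (p a b / ((∑ b', p a b') * (∑ a', p a' b)))
          = Real.log (p a b) - (Real.log (∑ b', p a b') + Real.log (∑ a', p a' b)) := by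
        rw [Real.log_div hppos.ne' (by positivity), Real.log_mul hpApos.ne' hqpos.ne']
      have hlogeD : Real.log (Real.exp (s a b) / D) = s a b - Real.log D := by
        rw [Real.log_div (Real.exp_ne_zero _) hDpos.ne', Real.log_exp]
      have hscalar : Real.log c + 1 - Real.log (p a b / ((∑ b', p a b') * (∑ a', p a' b)))
          - x ≤ -Real.log (Real.exp (s a b) / D) := by
        rw [hlogfrac, hlogeD]
        linarith [hlog, hlogx]
      have hKW : c * ((∑ b', p a b') * (((∑ a', p a' b) * ∏ j, (∑ a', p a' (w j))) *
          (Real.exp (s a b) / D)))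
          = (p a b * ∏ j, (∑ a', p a' (w j))) * x := by
        rw [hxdef]
        field_simp
      rw [hKW]
      have hWnn : (0:ℝ) ≤ p a b * ∏ j, (∑ a', p a' (w j)) :=
        mul_nonneg (hp a b) (hprodnn w)
      calc (p a b * ∏ j, (∑ a', p a' (w j))) *
            (Real.log c + 1 - Real.log (p a b / ((∑ b', p a b') * (∑ a', p a' b))))
            - (p a b * ∏ j, (∑ a', p a' (w j))) * x
          = (p a b * ∏ j, (∑ a', p a' (w j))) *
            (Real.log c + 1 - Real.log (p a b / ((∑ b', p a b') * (∑ a', p a' b))) - x) := by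
            ring
        _ ≤ (p a b * ∏ j, (∑ a', p a' (w j))) *
            (-Real.log (Real.exp (s a b) / D)) :=
            mul_le_mul_of_nonneg_left hscalar hWnn
  -- assemble
  rw [hcast]
  have hinner : ∀ a b, ∑ w : Fin m → B,
      (p a b * ∏ j, (∑ a', p a' (w j))) *
        (Real.log c + 1 - Real.log (p a b / ((∑ b', p a b') * (∑ a', p a' b))))
      = p a b * (Real.log c + 1 - Real.log (p a b / ((∑ b', p a b') * (∑ a', p a' b)))) := by
    intro a b
    rw [← Finset.sum_mul, ← Finset.mul_sum, hprodsum, mul_one]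
  have h1 : ∑ a, ∑ b, ∑ w : Fin m → B,
      (p a b * ∏ j, (∑ a', p a' (w j))) *
        (Real.log c + 1 - Real.log (p a b / ((∑ b', p a b') * (∑ a', p a' b))))
      = Real.log c + 1 -
        (∑ a, ∑ b, p a b * Real.log (p a b / ((∑ b', p a b') * (∑ a', p a' b)))) := by
    have h2 : ∑ a, ∑ b, p a b * (Real.log c + 1) = Real.log c + 1 := by
      simp only [← Finset.sum_mul]
      rw [hsum, one_mul]
    calc ∑ a, ∑ b, ∑ w : Fin m → B,
          (p a b * ∏ j, (∑ a', p a' (w j))) *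
            (Real.log c + 1 - Real.log (p a b / ((∑ b', p a b') * (∑ a', p a' b))))
        = ∑ a, ∑ b, (p a b * (Real.log c + 1) -
            p a b * Real.log (p a b / ((∑ b', p a b') * (∑ a', p a' b)))) := by
          refine Finset.sum_congr rfl fun a _ => Finset.sum_congr rfl fun b _ => ?_
          rw [hinner a b]; ring
      _ = (∑ a, ∑ b, p a b * (Real.log c + 1)) -
            (∑ a, ∑ b, p a b * Real.log (p a b / ((∑ b', p a b') * (∑ a', p a' b)))) := by
          simp only [Finset.sum_sub_distrib]
      _ = Real.log c + 1 -
            (∑ a, ∑ b, p a b * Real.log (p a b / ((∑ b', p a b') * (∑ a', p a' b)))) := by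
          rw [h2]
  calc Real.log c -
        (∑ a, ∑ b, p a b * Real.log (p a b / ((∑ b', p a b') * (∑ a', p a' b))))
      = (∑ a, ∑ b, ∑ w : Fin m → B,
          (p a b * ∏ j, (∑ a', p a' (w j))) *
            (Real.log c + 1 - Real.log (p a b / ((∑ b', p a b') * (∑ a', p a' b)))))
        - (∑ a, ∑ b, ∑ w : Fin m → B,
            c * ((∑ b', p a b') * (((∑ a', p a' b) * ∏ j, (∑ a', p a' (w j))) *
              (Real.exp (s a b) /
                (Real.exp (s a b) + ∑ j, Real.exp (s a (w j))))))) := by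
        rw [h1, hK]; ring
    _ = ∑ a, ∑ b, ∑ w : Fin m → B,
          ((p a b * ∏ j, (∑ a', p a' (w j))) *
            (Real.log c + 1 - Real.log (p a b / ((∑ b', p a b') * (∑ a', p a' b))))
          - c * ((∑ b', p a b') * (((∑ a', p a' b) * ∏ j, (∑ a', p a' (w j))) *
              (Real.exp (s a b) /
                (Real.exp (s a b) + ∑ j, Real.exp (s a (w j))))))) := by
        simp only [Finset.sum_sub_distrib]
    _ ≤ ∑ a, ∑ b, ∑ w : Fin m → B,
          (p a b * ∏ j, (∑ a', p a' (w j))) *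
            (-Real.log (Real.exp (s a b) /
              (Real.exp (s a b) + ∑ j, Real.exp (s a (w j))))) :=
        Finset.sum_le_sum fun a _ => Finset.sum_le_sum fun b _ =>
          Finset.sum_le_sum fun w _ => hpoint a b w

/-- The InfoNCE loss with `n` comparison terms (the positive plus `n-1` i.i.d.
negatives from the marginal of `Z₂`) is bounded below by `log n - I(Z₁; Z₂)`;
consequently the InfoNCE estimator `log n - L` of mutual information is
bounded above by `log n`. -/
theorem infoNCE_lower_bound
    {A B : Type*} [Fintype A] [Fintype B] [Nonempty A] [Nonempty B]
    (n : ℕ) (hn : 1 ≤ n)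
    (p : A → B → ℝ) (hp : ∀ a b, 0 ≤ p a b) (hsum : ∑ a, ∑ b, p a b = 1)
    (s : A → B → ℝ) :
    Real.log n -
        (∑ a, ∑ b, p a b * Real.log (p a b / ((∑ b', p a b') * (∑ a', p a' b)))) ≤
      (∑ a, ∑ b, ∑ w : Fin (n - 1) → B,
        (p a b * ∏ j, (∑ a', p a' (w j))) *
          (-Real.log (Real.exp (s a b) /
            (Real.exp (s a b) + ∑ j, Real.exp (s a (w j)))))) ∧
    Real.log n -
        (∑ a, ∑ b, ∑ w : Fin (n - 1) → B,
          (p a b * ∏ j, (∑ a', p a' (w j))) *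
            (-Real.log (Real.exp (s a b) /
              (Real.exp (s a b) + ∑ j, Real.exp (s a (w j)))))) ≤ Real.log n := by
  obtain ⟨m, rfl⟩ : ∃ m, n = m + 1 := ⟨n - 1, (Nat.succ_pred_eq_of_pos hn).symm⟩

  constructor
  · exact infoNCE_aux m p hp hsum s
  · have hL : (0:ℝ) ≤ ∑ a, ∑ b, ∑ w : Fin m → B,
        (p a b * ∏ j, (∑ a', p a' (w j))) *
          (-Real.log (Real.exp (s a b) /
            (Real.exp (s a b) + ∑ j, Real.exp (s a (w j))))) := by
      refine Finset.sum_nonneg fun a _ => Finset.sum_nonneg fun b _ =>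
        Finset.sum_nonneg fun w _ => mul_nonneg ?_ ?_
      · exact mul_nonneg (hp a b) (Finset.prod_nonneg fun j _ =>
          Finset.sum_nonneg fun a' _ => hp a' (w j))
      · have hne : (0:ℝ) ≤ ∑ j, Real.exp (s a (w j)) :=
          Finset.sum_nonneg fun j _ => (Real.exp_pos _).le
        have hDpos : (0:ℝ) < Real.exp (s a b) + ∑ j, Real.exp (s a (w j)) := by
          linarith [Real.exp_pos (s a b)]
        rw [neg_nonneg]
        apply Real.log_nonpos
        · positivity
        · rw [div_le_one hDpos]
          linarith
    exact sub_le_self _ hL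
end
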